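/- arXiv:1804.04051 — 3 statements merged into one kernel-verified Lean document; each statement's English description precedes it below -/
import Mathlib

section
/- Maximal characterization of the geometric mean: for positive definite matrices P, Q in S^d_{++}, the geometric mean P # Q := P^{1/2}(P^{-1/2} Q P^{-1/2})^{1/2} P^{1/2} is the maximum, in the Loewner order, of the set of symmetric matrices Y such that the 2d × 2d block matrix [[P, Y],[Y, Q]] is positive semidefinite. In particular, [[P, P#Q],[P#Q, Q]] ⪰ 0, and any symmetric Y with [[P, Y],[Y, Q]] ⪰ 0 satisfies Y ⪯ P # Q. -/
open Matrix

/-- Real power of a matrix via the spectral decomposition (defined for Hermitian input). -/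
noncomputable def mpow {d : ℕ} (A : Matrix (Fin d) (Fin d) ℝ) (t : ℝ) : Matrix (Fin d) (Fin d) ℝ :=
  if hA : A.IsHermitian then
    (hA.eigenvectorUnitary : Matrix (Fin d) (Fin d) ℝ) *
      Matrix.diagonal (fun i => hA.eigenvalues i ^ t) *
      star (hA.eigenvectorUnitary : Matrix (Fin d) (Fin d) ℝ)
  else A

/-- The geodesic `X #ₜ Y = X^{1/2} (X^{-1/2} Y X^{-1/2})^t X^{1/2}`. -/
noncomputable def geo {d : ℕ} (X Y : Matrix (Fin d) (Fin d) ℝ) (t : ℝ) : Matrix (Fin d) (Fin d) ℝ :=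
  mpow X (1/2) * mpow (mpow X (-(1/2)) * Y * mpow X (-(1/2))) t * mpow X (1/2)

/-- The matrix geometric mean `X # Y`. -/
noncomputable def gmean {d : ℕ} (X Y : Matrix (Fin d) (Fin d) ℝ) : Matrix (Fin d) (Fin d) ℝ :=
  geo X Y (1/2)

/-!
Write `S = P^{1/2}`, `T = P^{-1/2}` and `R = (T Q T)^{1/2}`, so that `P # Q = S R S`. The block
matrix `[[P, SRS], [SRS, Q]]` equals `Xᴴ X` for `X = [[S, RS], [0, 0]]`, hence is positive
semidefinite. Conversely, congruence by `diag(T, T)` turns `[[P, Y], [Y, Q]] ⪰ 0` into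
`[[1, Z], [Z, R²]] ⪰ 0` with `Z = T Y T`; its Schur complement gives `Z² ⪯ R²`, from which
`Z ⪯ R` follows by an eigenvector argument, and congruence by `S` gives `Y ⪯ S R S`.
-/

theorem mul_mul_mul_eq_self_of_inverse {M : Type*} [Monoid M] {s t : M} (hst : s * t = 1)
    (hts : t * s = 1) (w : M) : s * (t * w * t) * s = w := by
  simp only [← mul_assoc, hst, one_mul]
  rw [mul_assoc, hts, mul_one]

namespace Matrix

section Blocks

open scoped ComplexOrder

variable {m n 𝕜 : Type*} [Fintype m] [Fintype n] [RCLike 𝕜]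

theorem PosSemidef.fromBlocks_conj {A B C D : Matrix n n 𝕜}
    (h : (fromBlocks A B C D).PosSemidef) (X : Matrix m n 𝕜) :
    (fromBlocks (X * A * Xᴴ) (X * B * Xᴴ) (X * C * Xᴴ) (X * D * Xᴴ)).PosSemidef := by
  simpa [fromBlocks_conjTranspose, fromBlocks_multiply] using
    h.mul_mul_conjTranspose_same (fromBlocks X 0 0 X)

theorem posSemidef_fromBlocks_conjTranspose_mul (A B : Matrix n n 𝕜) :
    (fromBlocks (Aᴴ * A) (Aᴴ * B) (Bᴴ * A) (Bᴴ * B)).PosSemidef := by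
  simpa [fromBlocks_conjTranspose, fromBlocks_multiply] using
    posSemidef_conjTranspose_mul_self (fromBlocks A B (0 : Matrix n n 𝕜) 0)

theorem posSemidef_fromBlocks_one_iff [DecidableEq m] (B : Matrix m n 𝕜) (D : Matrix n n 𝕜) :
    (fromBlocks 1 B Bᴴ D).PosSemidef ↔ (D - Bᴴ * B).PosSemidef := by
  have : Invertible (1 : Matrix m m 𝕜) := invertibleOne
  simpa using PosDef.fromBlocks₁₁ B D PosDef.one

end Blocks

variable {n : Type*} [Fintype n]

theorem dotProduct_mul_self_mulVec {B : Matrix n n ℝ} (hB : B.IsHermitian) (v : n → ℝ) :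
    v ⬝ᵥ (B * B) *ᵥ v = B *ᵥ v ⬝ᵥ B *ᵥ v := by
  rw [← mulVec_mulVec, dotProduct_mulVec, ← mulVec_transpose,
    ← conjTranspose_eq_transpose_of_trivial, hB.eq]

/-- If `v` is an eigenvector of `R - Z` with eigenvalue `μ < 0`, then `Z v = R v - μ v` is strictly
longer than `R v`, contradicting `Z² ⪯ R²`. -/
theorem PosSemidef.sub_of_mul_self_sub_mul_self [DecidableEq n] {R Z : Matrix n n ℝ}
    (hR : R.PosSemidef) (hZ : Z.IsHermitian) (h : (R * R - Z * Z).PosSemidef) :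
    (R - Z).PosSemidef := by
  have hRZ : (R - Z).IsHermitian := hR.1.sub hZ
  refine hRZ.posSemidef_iff_eigenvalues_nonneg.mpr fun i => ?_
  by_contra! hμ
  change hRZ.eigenvalues i < 0 at hμ
  set μ := hRZ.eigenvalues i
  set v : n → ℝ := ⇑(hRZ.eigenvectorBasis i)
  have hv : v ≠ 0 := fun h0 =>
    hRZ.eigenvectorBasis.orthonormal.ne_zero i (by ext j; exact congrFun h0 j)
  have hZv : Z *ᵥ v = R *ᵥ v - μ • v := by
    rw [eq_sub_iff_add_eq, ← hRZ.mulVec_eigenvectorBasis i, sub_mulVec, add_sub_cancel]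
  have hsq : Z *ᵥ v ⬝ᵥ Z *ᵥ v ≤ R *ᵥ v ⬝ᵥ R *ᵥ v := by
    have := h.dotProduct_mulVec_nonneg v
    rw [sub_mulVec, dotProduct_sub, star_trivial, dotProduct_mul_self_mulVec hR.1,
      dotProduct_mul_self_mulVec hZ] at this
    linarith
  have hvR : 0 ≤ v ⬝ᵥ R *ᵥ v := by simpa using hR.dotProduct_mulVec_nonneg v
  have hvv : 0 < v ⬝ᵥ v := by simpa using dotProduct_star_self_pos_iff.mpr hv
  have hexpand : Z *ᵥ v ⬝ᵥ Z *ᵥ v =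
      R *ᵥ v ⬝ᵥ R *ᵥ v - 2 * μ * (v ⬝ᵥ R *ᵥ v) + μ ^ 2 * (v ⬝ᵥ v) := by
    rw [hZv]
    simp only [sub_dotProduct, dotProduct_sub, smul_dotProduct, dotProduct_smul, smul_eq_mul,
      dotProduct_comm (R *ᵥ v) v]
    ring
  nlinarith [mul_nonpos_of_nonpos_of_nonneg hμ.le hvR, mul_pos (mul_pos_of_neg_of_neg hμ hμ) hvv]

end Matrix

section MatrixPower

variable {d : ℕ} {A : Matrix (Fin d) (Fin d) ℝ}

theorem mpow_of_isHermitian (hA : A.IsHermitian) (t : ℝ) :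
    mpow A t = (hA.eigenvectorUnitary : Matrix (Fin d) (Fin d) ℝ) *
      diagonal (fun i => hA.eigenvalues i ^ t) *
      star (hA.eigenvectorUnitary : Matrix (Fin d) (Fin d) ℝ) :=
  dif_pos hA

theorem isHermitian_mpow (hA : A.IsHermitian) (t : ℝ) : (mpow A t).IsHermitian := by
  rw [mpow_of_isHermitian hA, star_eq_conjTranspose]
  exact isHermitian_mul_mul_conjTranspose _ (isHermitian_diagonal _)

theorem posDef_mpow (hA : A.PosDef) (t : ℝ) : (mpow A t).PosDef := by
  rw [mpow_of_isHermitian hA.1, Unitary.isUnit_coe.posDef_star_right_conjugate_iff,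
    posDef_diagonal_iff]
  exact fun i => Real.rpow_pos_of_pos (hA.eigenvalues_pos i) t

theorem mpow_zero (hA : A.IsHermitian) : mpow A 0 = 1 := by
  simp [mpow_of_isHermitian hA]

theorem mpow_one (hA : A.IsHermitian) : mpow A 1 = A := by
  conv_rhs => rw [hA.spectral_theorem]
  simp [mpow_of_isHermitian hA, Unitary.conjStarAlgAut_apply]

theorem mpow_add (hA : A.PosDef) (s t : ℝ) : mpow A (s + t) = mpow A s * mpow A t := by
  have hU : star (hA.1.eigenvectorUnitary : Matrix (Fin d) (Fin d) ℝ) *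
      hA.1.eigenvectorUnitary = 1 :=
    Unitary.coe_star_mul_self _
  simp only [mpow_of_isHermitian hA.1, Matrix.mul_assoc]
  rw [← Matrix.mul_assoc (star _) _ (diagonal _ * _), hU, Matrix.one_mul,
    ← Matrix.mul_assoc (diagonal _), diagonal_mul_diagonal]
  simp only [Real.rpow_add (hA.eigenvalues_pos _)]

theorem mpow_mul_mpow_neg (hA : A.PosDef) (t : ℝ) : mpow A t * mpow A (-t) = 1 := by
  rw [← mpow_add hA, add_neg_cancel, mpow_zero hA.1]

theorem mpow_neg_mul_mpow (hA : A.PosDef) (t : ℝ) : mpow A (-t) * mpow A t = 1 := by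
  rw [← mpow_add hA, neg_add_cancel, mpow_zero hA.1]

theorem mpow_half_mul_mpow_half (hA : A.PosDef) : mpow A (1 / 2) * mpow A (1 / 2) = A := by
  rw [← mpow_add hA, add_halves, mpow_one hA.1]

theorem posDef_mpow_mul_mul_mpow {B : Matrix (Fin d) (Fin d) ℝ} (hA : A.PosDef) (hB : B.PosDef)
    (t : ℝ) : (mpow A t * B * mpow A t).PosDef := by
  have h := (posDef_mpow hA t).isUnit.posDef_star_right_conjugate_iff.mpr hB
  rwa [star_eq_conjTranspose, (isHermitian_mpow hA.1 t).eq] at h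

end MatrixPower

section GeometricMean

variable {d : ℕ} {P Q : Matrix (Fin d) (Fin d) ℝ}

theorem posSemidef_fromBlocks_gmean (hP : P.PosDef) (hQ : Q.PosDef) :
    (fromBlocks P (gmean P Q) (gmean P Q) Q).PosSemidef := by
  set S := mpow P (1 / 2)
  set R := mpow (mpow P (-(1 / 2)) * Q * mpow P (-(1 / 2))) (1 / 2)
  have hM := posDef_mpow_mul_mul_mpow hP hQ (-(1 / 2))
  have hS : Sᴴ = S := (isHermitian_mpow hP.1 _).eq
  have hR : Rᴴ = R := (isHermitian_mpow hM.1 _).eq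
  have hSS : S * S = P := mpow_half_mul_mpow_half hP
  have hSRRS : S * (R * (R * S)) = Q := by
    rw [← Matrix.mul_assoc R, mpow_half_mul_mpow_half hM, ← Matrix.mul_assoc,
      mul_mul_mul_eq_self_of_inverse (mpow_mul_mpow_neg hP _) (mpow_neg_mul_mpow hP _)]
  rw [show gmean P Q = S * R * S from rfl]
  simpa only [conjTranspose_mul, hS, hR, hSS, hSRRS, Matrix.mul_assoc] using
    posSemidef_fromBlocks_conjTranspose_mul S (R * S)

theorem posSemidef_gmean_sub (hP : P.PosDef) (hQ : Q.PosDef) {Y : Matrix (Fin d) (Fin d) ℝ}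
    (hY : Y.IsHermitian) (hPYQ : (fromBlocks P Y Y Q).PosSemidef) :
    (gmean P Q - Y).PosSemidef := by
  set S := mpow P (1 / 2)
  set T := mpow P (-(1 / 2))
  set M := T * Q * T
  set R := mpow M (1 / 2)
  set Z := T * Y * T
  have hM : M.PosDef := posDef_mpow_mul_mul_mpow hP hQ _
  have hS : Sᴴ = S := (isHermitian_mpow hP.1 _).eq
  have hT : Tᴴ = T := (isHermitian_mpow hP.1 _).eq
  have hST : S * T = 1 := mpow_mul_mpow_neg hP _
  have hTS : T * S = 1 := mpow_neg_mul_mpow hP _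
  have hTPT : T * P * T = 1 := by
    rw [← mpow_half_mul_mpow_half hP, ← Matrix.mul_assoc, Matrix.mul_assoc, hTS, hST,
      Matrix.one_mul]
  have hZ : Z.IsHermitian := by simpa only [hT] using isHermitian_mul_mul_conjTranspose T hY
  have hblock := hPYQ.fromBlocks_conj T
  rw [hT, hTPT] at hblock
  have hMZ : (M - Z * Z).PosSemidef := by
    simpa only [hZ.eq] using (posSemidef_fromBlocks_one_iff Z M).mp (by rwa [hZ.eq])
  have hRZ : (R - Z).PosSemidef :=
    (posDef_mpow hM _).posSemidef.sub_of_mul_self_sub_mul_self hZ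
      (by rwa [show R * R = M from mpow_half_mul_mpow_half hM])
  have h := hRZ.mul_mul_conjTranspose_same S
  rwa [hS, Matrix.mul_sub, Matrix.sub_mul, mul_mul_mul_eq_self_of_inverse hST hTS] at h

end GeometricMean

theorem stmt3 {d : ℕ} (P Q : Matrix (Fin d) (Fin d) ℝ) (hP : P.PosDef) (hQ : Q.PosDef) :
    (Matrix.fromBlocks P (gmean P Q) (gmean P Q) Q).PosSemidef ∧
    (∀ Y : Matrix (Fin d) (Fin d) ℝ, Y.IsSymm →
      (Matrix.fromBlocks P Y Y Q).PosSemidef → (gmean P Q - Y).PosSemidef) :=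
  ⟨posSemidef_fromBlocks_gmean hP hQ, fun _ hY hPYQ =>
    posSemidef_gmean_sub hP hQ (isHermitian_iff_isSymm.mpr hY) hPYQ⟩
end

section
/- If Φ : S^d_+ → S^{d'}_+ is a positive linear map (maps PSD matrices to PSD matrices) and P, Q, R are d×d symmetric matrices with the block matrix [[P, R],[R, Q]] positive semidefinite, then the block matrix [[Φ(P), Φ(R)],[Φ(R), Φ(Q)]] is also positive semidefinite. -/
open Matrix

/-!
If `P` is positive definite, one congruence `V` brings `P` to `1` and the Hermitian `R` to a real
diagonal `D`: `P = V Vᴴ` and `R = V D Vᴴ`. The Schur complement condition then reads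
`Q ≥ R P⁻¹ R = V D² Vᴴ`, so the block matrix is a sum of separable pieces
`[[1, dᵢ], [dᵢ, dᵢ²]] ⊗ V Eᵢᵢ Vᴴ` plus `[[0, 0], [0, Q - R P⁻¹ R]]`. Applied blockwise, `Φ` sends
a piece `A ⊗ X` with `A, X ≥ 0` to `A ⊗ Φ X ≥ 0`, so positivity of `Φ` suffices.
The general case follows by replacing `P` and `Q` with `P + ε` and `Q + ε` and letting `ε → 0`,
as the positive semidefinite cone is closed.
-/

open scoped ComplexOrder

namespace Matrix

variable {𝕜 : Type*} [RCLike 𝕜] {n m : Type*} [Fintype n] [Fintype m]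

theorem isClosed_setOf_posSemidef : IsClosed {A : Matrix n n 𝕜 | A.PosSemidef} := by
  simp only [posSemidef_iff_dotProduct_mulVec, Set.ofPred_and, Set.ofPred_forall]
  refine .inter (isClosed_eq continuous_id.matrix_conjTranspose continuous_id) ?_
  exact isClosed_iInter fun x => isClosed_le continuous_const (by fun_prop)

theorem PosSemidef.fromBlocks_smul [DecidableEq m] {Y : Matrix m m 𝕜} (hY : Y.PosSemidef)
    (a b : 𝕜) :
    (fromBlocks ((star a * a) • Y) ((star a * b) • Y) ((star b * a) • Y)
      ((star b * b) • Y)).PosSemidef := by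
  have := hY.conjTranspose_mul_mul_same
    (fromCols (a • (1 : Matrix m m 𝕜)) (b • (1 : Matrix m m 𝕜)))
  rw [conjTranspose_fromCols_eq_fromRows_conjTranspose, fromRows_mul, fromRows_mul_fromCols] at this
  simpa only [conjTranspose_smul, conjTranspose_one, smul_mul_assoc, one_mul, mul_smul_comm,
    mul_one, smul_smul, mul_comm] using this

theorem diagonal_eq_sum_smul_single [DecidableEq n] {α : Type*} [Semiring α] (d : n → α) :
    diagonal d = ∑ i, d i • single i i (1 : α) := by
  ext j k
  rw [sum_apply]
  simp only [smul_apply, single_apply, diagonal_apply, smul_eq_mul, mul_ite, mul_one, mul_zero]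
  by_cases h : j = k
  · subst h
    simp
  · simp only [h, if_false]
    exact (Finset.sum_eq_zero fun c _ => if_neg fun hc : c = j ∧ c = k => h (hc.1 ▸ hc.2)).symm

theorem posSemidef_fromBlocks_map_diagonal [DecidableEq n] [DecidableEq m]
    (Ψ : Matrix n n 𝕜 →ₗ[𝕜] Matrix m m 𝕜) (hΨ : ∀ X, X.PosSemidef → (Ψ X).PosSemidef)
    (t : n → ℝ) :
    (fromBlocks (Ψ 1) (Ψ (diagonal fun i => (t i : 𝕜))) (Ψ (diagonal fun i => (t i : 𝕜)))
      (Ψ (diagonal fun i => (t i : 𝕜) ^ 2))).PosSemidef := by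
  have hsingle (i : n) : (Ψ (single i i 1)).PosSemidef := by
    refine hΨ _ ?_
    rw [← diagonal_single, posSemidef_diagonal_iff]
    intro j
    by_cases h : j = i <;> simp [h]
  have hsum : fromBlocks (Ψ 1) (Ψ (diagonal fun i => (t i : 𝕜)))
      (Ψ (diagonal fun i => (t i : 𝕜))) (Ψ (diagonal fun i => (t i : 𝕜) ^ 2)) = ∑ i, fromBlocks
        ((star 1 * 1 : 𝕜) • Ψ (single i i 1)) ((star 1 * (t i : 𝕜)) • Ψ (single i i 1))
        ((star (t i : 𝕜) * 1) • Ψ (single i i 1)) ((star (t i : 𝕜) * t i) • Ψ (single i i 1)) := by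
    rw [← diagonal_one, diagonal_eq_sum_smul_single, diagonal_eq_sum_smul_single,
      diagonal_eq_sum_smul_single]
    simp only [map_sum, map_smul]
    ext (j | j) (k | k) <;> simp [sum_apply, sq]
  rw [hsum]
  exact posSemidef_sum _ fun i _ => (hsingle i).fromBlocks_smul 1 (t i)

theorem IsHermitian.exists_eq_mul_diagonal_mul_conjTranspose [DecidableEq n] {S : Matrix n n 𝕜}
    (hS : S.IsHermitian) :
    ∃ (U : Matrix n n 𝕜) (t : n → ℝ), U * Uᴴ = 1 ∧ S = U * diagonal (fun i => (t i : 𝕜)) * Uᴴ :=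
  ⟨_, _, Unitary.coe_mul_star_self _, hS.spectral_theorem⟩

open scoped MatrixOrder in
theorem PosDef.exists_eq_mul_mul_conjTranspose_of_isHermitian [DecidableEq n]
    {P R : Matrix n n 𝕜} (hP : P.PosDef) (hR : R.IsHermitian) :
    ∃ (V : Matrix n n 𝕜) (t : n → ℝ),
      IsUnit V.det ∧ P = V * Vᴴ ∧ R = V * diagonal (fun i => (t i : 𝕜)) * Vᴴ := by
  obtain ⟨W, hW, rfl⟩ := CStarAlgebra.isStrictlyPositive_iff_eq_star_mul_self.mp
    hP.isStrictlyPositive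
  have hWH : IsUnit Wᴴ.det := (isUnit_iff_isUnit_det _).mp hW.star
  have hWHH : IsUnit Wᴴᴴ.det := by rw [det_conjTranspose]; exact hWH.star
  obtain ⟨U, t, hU, hspec⟩ :=
    (isHermitian_mul_mul_conjTranspose Wᴴ⁻¹ hR).exists_eq_mul_diagonal_mul_conjTranspose
  refine ⟨Wᴴ * U, t, ?_, ?_, ?_⟩
  · rw [det_mul]
    exact hWH.mul (isUnit_det_of_right_inverse hU)
  · rw [conjTranspose_mul, Matrix.mul_assoc, ← Matrix.mul_assoc U, hU, Matrix.one_mul,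
      conjTranspose_conjTranspose, star_eq_conjTranspose]
  · calc R = Wᴴ * (Wᴴ⁻¹ * R * Wᴴ⁻¹ᴴ) * Wᴴᴴ := by
          simp only [conjTranspose_nonsing_inv, Matrix.mul_assoc,
            mul_nonsing_inv_cancel_left _ _ hWH, nonsing_inv_mul _ hWHH, Matrix.mul_one]
      _ = Wᴴ * U * diagonal (fun i => (t i : 𝕜)) * (Wᴴ * U)ᴴ := by
          rw [hspec, conjTranspose_mul]
          simp only [Matrix.mul_assoc]

theorem mul_mul_conjTranspose_mul_inv_mul [DecidableEq n] {V : Matrix n n 𝕜}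
    (hV : IsUnit V.det) (A B : Matrix n n 𝕜) :
    V * A * Vᴴ * (V * Vᴴ)⁻¹ * (V * B * Vᴴ) = V * (A * B) * Vᴴ := by
  have hVH : IsUnit Vᴴ.det := by rw [det_conjTranspose]; exact hV.star
  rw [mul_inv_rev]
  simp only [Matrix.mul_assoc, mul_nonsing_inv_cancel_left _ _ hVH,
    nonsing_inv_mul_cancel_left _ _ hV]

theorem posSemidef_fromBlocks_map_of_posDef [DecidableEq n] [DecidableEq m]
    (Φ : Matrix n n 𝕜 →ₗ[𝕜] Matrix m m 𝕜) (hΦ : ∀ X, X.PosSemidef → (Φ X).PosSemidef)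
    {P Q R : Matrix n n 𝕜} (hP : P.PosDef) (hR : R.IsHermitian)
    (h : (fromBlocks P R R Q).PosSemidef) :
    (fromBlocks (Φ P) (Φ R) (Φ R) (Φ Q)).PosSemidef := by
  obtain ⟨V, t, hV, rfl, rfl⟩ := hP.exists_eq_mul_mul_conjTranspose_of_isHermitian hR
  have : Invertible (V * Vᴴ) := hP.isUnit.invertible
  have hschur : (Q - V * diagonal (fun i => (t i : 𝕜) ^ 2) * Vᴴ).PosSemidef := by
    have := (PosDef.fromBlocks₁₁ _ Q hP).mp (by rwa [hR.eq])
    rw [hR.eq, mul_mul_conjTranspose_mul_inv_mul hV, diagonal_mul_diagonal] at this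
    simpa only [sq] using this
  let Ψ := Φ ∘ₗ LinearMap.mulLeftRight 𝕜 (V, Vᴴ)
  have hΨ (X : Matrix n n 𝕜) (hX : X.PosSemidef) : (Ψ X).PosSemidef :=
    hΦ _ (hX.mul_mul_conjTranspose_same V)
  have := (posSemidef_fromBlocks_map_diagonal Ψ hΨ t).add ((hΦ _ hschur).fromBlocks_smul 0 1)
  convert this using 1
  simp [Ψ, fromBlocks_add, LinearMap.mulLeftRight_apply, sq]

open Filter Topology in
theorem posSemidef_fromBlocks_map [DecidableEq n] [DecidableEq m]
    (Φ : Matrix n n 𝕜 →ₗ[𝕜] Matrix m m 𝕜) (hΦ : ∀ X, X.PosSemidef → (Φ X).PosSemidef)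
    {P Q R : Matrix n n 𝕜} (hR : R.IsHermitian) (h : (fromBlocks P R R Q).PosSemidef) :
    (fromBlocks (Φ P) (Φ R) (Φ R) (Φ Q)).PosSemidef := by
  have hP : P.PosSemidef := h.submatrix Sum.inl
  let M (ε : ℝ) := fromBlocks (Φ (P + ε • 1)) (Φ R) (Φ R) (Φ (Q + ε • 1))
  have hM : Tendsto M (𝓝[>] 0) (𝓝 (M 0)) := by
    have := Φ.continuous_of_finiteDimensional
    exact (Continuous.tendsto (by fun_prop) 0).mono_left nhdsWithin_le_nhds
  have hpos (ε : ℝ) (hε : 0 < ε) : (M ε).PosSemidef := by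
    have hεI : (ε • 1 : Matrix n n 𝕜).PosDef := PosDef.one.smul hε
    refine posSemidef_fromBlocks_map_of_posDef Φ hΦ (PosDef.posSemidef_add hP hεI) hR ?_
    have := h.add (PosDef.one.smul hε).posSemidef
    rwa [← fromBlocks_one, fromBlocks_smul, fromBlocks_add, smul_zero, add_zero] at this
  simpa [M] using isClosed_setOf_posSemidef.mem_of_tendsto hM (eventually_nhdsWithin_of_forall hpos)

end Matrix

theorem stmt4_general {d d' : ℕ}
    (Φ : Matrix (Fin d) (Fin d) ℝ →ₗ[ℝ] Matrix (Fin d') (Fin d') ℝ)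
    (hΦ : ∀ X : Matrix (Fin d) (Fin d) ℝ, X.PosSemidef → (Φ X).PosSemidef)
    (P Q R : Matrix (Fin d) (Fin d) ℝ)
    (hR : R.IsSymm)
    (h : (Matrix.fromBlocks P R R Q).PosSemidef) :
    (Matrix.fromBlocks (Φ P) (Φ R) (Φ R) (Φ Q)).PosSemidef :=
  posSemidef_fromBlocks_map Φ hΦ (isHermitian_iff_isSymm.mpr hR) h

theorem stmt4 {d d' : ℕ}
    (Φ : Matrix (Fin d) (Fin d) ℝ →ₗ[ℝ] Matrix (Fin d') (Fin d') ℝ)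
    (hΦ : ∀ X : Matrix (Fin d) (Fin d) ℝ, X.PosSemidef → (Φ X).PosSemidef)
    (P Q R : Matrix (Fin d) (Fin d) ℝ)
    (hP : P.IsSymm) (hQ : Q.IsSymm) (hR : R.IsSymm)
    (h : (Matrix.fromBlocks P R R Q).PosSemidef) :
    (Matrix.fromBlocks (Φ P) (Φ R) (Φ R) (Φ Q)).PosSemidef :=
  stmt4_general Φ hΦ P Q R hR h
end

section
/- If Φ : S^d_+ → S^{d'}_+ is a strictly positive linear map, then the function X ↦ log det(Φ(X)) on S^d_{++} is geodesically convex with respect to the affine-invariant metric; concretely, for all positive definite X, Y: log det(Φ(X # Y)) ≤ (1/2) log det(Φ(X)) + (1/2) log det(Φ(Y)), where X # Y is the matrix geometric mean. -/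
open Matrix

/-!
Write `X = R Rᴴ`, `X # Y = R K Rᴴ` and `Y = R K² Rᴴ` with `R = X^{1/2}` and
`K = (X^{-1/2} Y X^{-1/2})^{1/2}`, and let `Ψ = Φ (R · Rᴴ)`, again a positive map.
With the spectral decomposition `K = ∑ λᵢ Eᵢ` into rank-one projections, the block matrix
`[[Ψ 1, Ψ K], [Ψ K, Ψ K²]]` is the sum of the positive semidefinite blocks
`[[Ψ Eᵢ, λᵢ Ψ Eᵢ], [λᵢ Ψ Eᵢ, λᵢ² Ψ Eᵢ]]`. Its Schur complement gives
`Ψ K (Ψ K²)⁻¹ Ψ K ≤ Ψ 1`, and monotonicity of the determinant on the Loewner order yields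
`det Φ(X # Y)² ≤ det Φ(X) · det Φ(Y)`.
-/

open scoped MatrixOrder

namespace Matrix

lemma fromBlocks_sum {n ι : Type*} (s : Finset ι) (A B C D : ι → Matrix n n ℝ) :
    fromBlocks (∑ i ∈ s, A i) (∑ i ∈ s, B i) (∑ i ∈ s, C i) (∑ i ∈ s, D i) =
      ∑ i ∈ s, fromBlocks (A i) (B i) (C i) (D i) := by
  ext (i | i) (j | j) <;> simp [sum_apply]

lemma posSemidef_map_of_forall_posDef {m n : Type*} [DecidableEq m] [Fintype n]
    {Φ : Matrix m m ℝ →ₗ[ℝ] Matrix n n ℝ} (hΦ : ∀ X, X.PosDef → (Φ X).PosDef)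
    {M : Matrix m m ℝ} (hM : M.PosSemidef) : (Φ M).PosSemidef := by
  have hε : ∀ ε : ℝ, 0 < ε → (Φ M + ε • Φ 1).PosDef := fun ε hε => by
    simpa using hΦ _ (PosDef.posSemidef_add hM (PosDef.one.smul hε))
  refine .of_dotProduct_mulVec_nonneg (by simpa using (hε 1 one_pos).1.sub (hΦ 1 .one).1)
    fun x => ?_
  rcases eq_or_ne x 0 with rfl | hx
  · simp
  have hc : 0 < star x ⬝ᵥ Φ 1 *ᵥ x := (hΦ 1 .one).dotProduct_mulVec_pos hx
  by_contra! hq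
  have := (hε _ (div_pos (neg_pos.2 hq) hc)).dotProduct_mulVec_pos hx
  rw [add_mulVec, dotProduct_add, smul_mulVec, dotProduct_smul, smul_eq_mul,
    div_mul_cancel₀ _ hc.ne'] at this
  linarith

variable {n : Type*} [Fintype n] [DecidableEq n]

lemma IsHermitian.det_cfc {A : Matrix n n ℝ} (hA : A.IsHermitian) (f : ℝ → ℝ) :
    (cfc f A).det = ∏ i, f (hA.eigenvalues i) := by
  rw [hA.cfc_eq, IsHermitian.cfc, Unitary.conjStarAlgAut_apply, det_mul, det_mul, mul_right_comm,
    ← det_mul, Unitary.mul_star_self_of_mem hA.eigenvectorUnitary.2, det_one, one_mul, det_diagonal]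
  rfl

lemma IsHermitian.cfc_eq_sum {A : Matrix n n ℝ} (hA : A.IsHermitian) (f : ℝ → ℝ) :
    cfc f A = ∑ i, f (hA.eigenvalues i) • ((hA.eigenvectorUnitary : Matrix n n ℝ) *
      single i i 1 * star (hA.eigenvectorUnitary : Matrix n n ℝ)) := by
  rw [hA.cfc_eq, IsHermitian.cfc, Unitary.conjStarAlgAut_apply, ← sum_single_eq_diagonal,
    Finset.mul_sum, Finset.sum_mul]
  refine Finset.sum_congr rfl fun i _ => ?_
  rw [show single i i _ = f (hA.eigenvalues i) • single i i (1 : ℝ) by simp [smul_single],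
    mul_smul_comm, smul_mul_assoc]

lemma PosSemidef.one_le_det_one_add {Q : Matrix n n ℝ} (hQ : Q.PosSemidef) :
    1 ≤ (1 + Q).det := by
  have h : 1 + Q = cfc (fun x : ℝ => 1 + x) Q := by
    have : IsSelfAdjoint Q := hQ.1
    rw [cfc_const_add (1 : ℝ) (fun x : ℝ => x) Q, map_one, cfc_id' ℝ Q]
  rw [h, hQ.1.det_cfc]
  exact Finset.one_le_prod fun i _ => le_add_of_nonneg_right (hQ.eigenvalues_nonneg i)

lemma det_le_det_of_posSemidef_sub {M N : Matrix n n ℝ} (hM : M.PosSemidef)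
    (hMN : (N - M).PosSemidef) : M.det ≤ N.det := by
  rcases eq_or_ne M.det 0 with h | h
  · rw [h]
    exact (by simpa using hM.add hMN : N.PosSemidef).det_nonneg
  obtain ⟨T, hT, rfl⟩ := CStarAlgebra.isStrictlyPositive_iff_eq_star_mul_self.mp
    (hM.posDef_iff_det_ne_zero.mpr h).isStrictlyPositive
  lift T to (Matrix n n ℝ)ˣ using hT
  set S : Matrix n n ℝ := ↑T⁻¹
  set Q := star S * (N - star (T : Matrix n n ℝ) * T) * S
  have hN : N = star (T : Matrix n n ℝ) * (1 + Q) * T := by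
    simp only [Q, S, mul_add, add_mul, mul_one, mul_sub, sub_mul, ← mul_assoc, ← star_mul,
      Units.mul_inv, star_one, one_mul]
    simp [mul_assoc]
  have hQ : Q.PosSemidef := hMN.conjTranspose_mul_mul_same _
  rw [hN, det_mul, det_mul, det_mul, star_eq_conjTranspose, det_conjTranspose, star_trivial]
  nlinarith [hQ.one_le_det_one_add, mul_self_nonneg (T : Matrix n n ℝ).det]

lemma det_sq_le_of_posSemidef_fromBlocks {A B D : Matrix n n ℝ}
    (h : (fromBlocks A B Bᴴ D).PosSemidef) (hD : D.PosDef) : B.det ^ 2 ≤ A.det * D.det := by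
  have := hD.isUnit.invertible
  have hC : (B * D⁻¹ * Bᴴ).PosSemidef := hD.inv.posSemidef.mul_mul_conjTranspose_same B
  have hle := det_le_det_of_posSemidef_sub hC ((PosDef.fromBlocks₂₂ A B hD).mp h)
  rw [det_mul, det_mul, det_nonsing_inv, det_conjTranspose, star_trivial,
    Ring.inverse_eq_inv'] at hle
  have hDpos := hD.det_pos
  calc B.det ^ 2 = B.det * D.det⁻¹ * B.det * D.det := by field_simp
    _ ≤ A.det * D.det := by gcongr

lemma PosSemidef.fromBlocks_smul_s6 {P : Matrix n n ℝ} (hP : P.PosSemidef) (c : ℝ) :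
    (fromBlocks P (c • P) (c • P)ᴴ (c ^ 2 • P)).PosSemidef := by
  have hPt : Pᵀ = P := by simpa using hP.1.eq
  have := hP.conjTranspose_mul_mul_same (fromCols (1 : Matrix n n ℝ) (c • (1 : Matrix n n ℝ)))
  rw [conjTranspose_fromCols_eq_fromRows_conjTranspose, fromRows_mul, fromRows_mul_fromCols]
    at this
  simpa [hPt, sq, smul_smul] using this

lemma posSemidef_fromBlocks_map_s6 {m : Type*} [Fintype m] [DecidableEq m]
    {Φ : Matrix m m ℝ →ₗ[ℝ] Matrix n n ℝ} (hΦ : ∀ M, M.PosSemidef → (Φ M).PosSemidef)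
    {K : Matrix m m ℝ} (hK : K.IsHermitian) :
    (fromBlocks (Φ 1) (Φ K) (Φ K)ᴴ (Φ (K * K))).PosSemidef := by
  set U := (hK.eigenvectorUnitary : Matrix m m ℝ)
  set P := fun i => Φ (U * single i i 1 * star U)
  have hP : ∀ i, (P i).PosSemidef := fun i => hΦ _ <| by
    simpa [star_eq_conjTranspose, diagonal_single] using
      (PosSemidef.diagonal (Pi.single_nonneg.mpr zero_le_one)).mul_mul_conjTranspose_same U
  have hpow : ∀ k : ℕ, Φ (K ^ k) = ∑ i, hK.eigenvalues i ^ k • P i := fun k => by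
    have : IsSelfAdjoint K := hK
    rw [← cfc_pow_id (R := ℝ) K k, hK.cfc_eq_sum, map_sum]
    simp only [map_smul, P, U]
  have h0 := hpow 0
  have h1 := hpow 1
  have h2 := hpow 2
  simp only [pow_zero, one_smul, pow_one] at h0 h1
  rw [sq] at h2
  rw [h0, h1, h2, conjTranspose_sum, fromBlocks_sum]
  exact posSemidef_sum _ fun i _ => by simpa [sq] using (hP i).fromBlocks_smul_s6 (hK.eigenvalues i)

end Matrix

lemma mpow_eq_rpow {d : ℕ} {A : Matrix (Fin d) (Fin d) ℝ} (hA : A.PosSemidef) (t : ℝ) :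
    mpow A t = A ^ t := by
  rw [mpow, dif_pos hA.1, CFC.rpow_eq_cfc_real hA.nonneg, hA.1.cfc_eq, IsHermitian.cfc,
    Unitary.conjStarAlgAut_apply]
  rfl

lemma exists_conj_eq_gmean {d : ℕ} {X Y : Matrix (Fin d) (Fin d) ℝ} (hX : X.PosDef)
    (hY : Y.PosDef) : ∃ R K : Matrix (Fin d) (Fin d) ℝ, IsUnit R ∧ K.PosDef ∧
      R * Rᴴ = X ∧ R * K * Rᴴ = gmean X Y ∧ R * (K * K) * Rᴴ = Y := by
  have hXpos := hX.isStrictlyPositive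
  set R := X ^ (1 / 2 : ℝ)
  set S := X ^ (-(1 / 2) : ℝ)
  have hRS : R * S = 1 := CFC.rpow_mul_rpow_neg _ hXpos
  have hSR : S * R = 1 := CFC.rpow_neg_mul_rpow _ hXpos
  have hR : Rᴴ = R := (IsSelfAdjoint.of_nonneg CFC.rpow_nonneg).star_eq
  have hS : star S = S := (IsSelfAdjoint.of_nonneg CFC.rpow_nonneg).star_eq
  have hRR : R * R = X := by
    rw [← CFC.rpow_add hX.isUnit]
    norm_num
    exact CFC.rpow_one X
  set M := S * Y * S
  have hM : M.PosDef := by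
    simpa only [M, hS] using
      (IsUnit.posDef_star_right_conjugate_iff ⟨⟨S, R, hSR, hRS⟩, rfl⟩).mpr hY
  set K := M ^ (1 / 2 : ℝ)
  have hK : K.PosDef := isStrictlyPositive_iff_posDef.mp (hM.isStrictlyPositive.rpow _ _)
  have hKK : K * K = M := by
    rw [show K = CFC.sqrt M from CFC.sqrt_eq_rpow.symm]
    exact CFC.sqrt_mul_sqrt_self M hM.posSemidef.nonneg
  refine ⟨R, K, ⟨⟨R, S, hRS, hSR⟩, rfl⟩, hK, by rw [hR, hRR], ?_, ?_⟩
  · simp only [gmean, geo, mpow_eq_rpow hX.posSemidef, hR]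
    rw [mpow_eq_rpow hM.posSemidef]
  · rw [hKK, hR]
    calc R * (S * Y * S) * R = (R * S) * Y * (S * R) := by simp only [mul_assoc]
      _ = Y := by rw [hRS, hSR, one_mul, mul_one]

lemma posDef_gmean {d : ℕ} {X Y : Matrix (Fin d) (Fin d) ℝ} (hX : X.PosDef) (hY : Y.PosDef) :
    (gmean X Y).PosDef := by
  obtain ⟨R, K, hR, hK, -, hG, -⟩ := exists_conj_eq_gmean hX hY
  rw [← hG, ← star_eq_conjTranspose]
  exact (IsUnit.posDef_star_right_conjugate_iff hR).mpr hK

theorem stmt6 {d d' : ℕ}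
    (Φ : Matrix (Fin d) (Fin d) ℝ →ₗ[ℝ] Matrix (Fin d') (Fin d') ℝ)
    (hΦ : ∀ X : Matrix (Fin d) (Fin d) ℝ, X.PosDef → (Φ X).PosDef)
    (X Y : Matrix (Fin d) (Fin d) ℝ) (hX : X.PosDef) (hY : Y.PosDef) :
    Real.log (Φ (gmean X Y)).det ≤
      (1/2) * Real.log (Φ X).det + (1/2) * Real.log (Φ Y).det := by
  obtain ⟨R, K, -, hK, hXR, hGR, hYR⟩ := exists_conj_eq_gmean hX hY
  let Ψ := Φ ∘ₗ LinearMap.mulLeftRight ℝ (R, Rᴴ)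
  have hΨ : ∀ M, M.PosSemidef → (Ψ M).PosSemidef := fun M hM =>
    posSemidef_map_of_forall_posDef hΦ (hM.mul_mul_conjTranspose_same R)
  have hblock := posSemidef_fromBlocks_map_s6 hΨ hK.1
  simp only [Ψ, LinearMap.comp_apply, LinearMap.mulLeftRight_apply, mul_one, hXR, hGR, hYR]
    at hblock
  have hdet := det_sq_le_of_posSemidef_fromBlocks hblock (hΦ Y hY)
  have hGpos := (hΦ _ (posDef_gmean hX hY)).det_pos
  have hXpos := (hΦ X hX).det_pos
  have hYpos := (hΦ Y hY).det_pos
  have hlog := Real.log_le_log (pow_pos hGpos 2) hdet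
  rw [Real.log_pow, Real.log_mul hXpos.ne' hYpos.ne'] at hlog
  push_cast at hlog
  linarith
end
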